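/- arXiv:2405.06244 — 2 statements merged into one kernel-verified Lean document; each statement's English description precedes it below -/
import Mathlib

section
/- Let G=(V,E) be a complete graph, d_1,...,d_k distinct vertices (with d_{k+1}:=d_1), and for each i let (x^i, y^i) be a point in the fractional d_i-d_{i+1} stroll polytope P_stroll (i.e., x^i(δ(v)) = 2 y^i_v for all v; x^i(δ(S)) ≥ 1 for all S ⊆ V\{d_{i+1}} with d_i ∈ S; x^i(δ(S)) ≥ 2 y^i_v for all S ⊆ V\{d_i, d_{i+1}} and v ∈ S; y^i_{d_i} = y^i_{d_{i+1}} = 1/2). Suppose additionally that Σ_{i=1}^k y^i_v = 1 for every v ∈ V. Then x := Σ_{i=1}^k x^i lies in the Held-Karp polytope P_HK(G), i.e., x(δ(v)) = 2 for all v ∈ V and x(δ(S)) ≥ 2 for all nonempty proper subsets S ⊊ V. -/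
open scoped Classical BigOperators

/-- `cutFun x S` is `x(δ(S))`: the total `x`-value of edges with exactly one endpoint in `S`,
where `x : V → V → ℝ` is a symmetric edge-weight function. -/
noncomputable def cutFun {V : Type*} [Fintype V] [DecidableEq V]
    (x : V → V → ℝ) (S : Finset V) : ℝ :=
  ∑ u ∈ S, ∑ v ∈ Sᶜ, x u v

/-- `(x, y)` lies in the fractional `s`-`t` stroll polytope `P_stroll`. -/
def IsStroll {V : Type*} [Fintype V] [DecidableEq V]
    (x : V → V → ℝ) (y : V → ℝ) (s t : V) : Prop :=
  (∀ u v, 0 ≤ x u v) ∧ (∀ u v, x u v = x v u) ∧ (∀ v, x v v = 0) ∧ (∀ v, 0 ≤ y v) ∧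
  (∀ v, cutFun x {v} = 2 * y v) ∧
  (∀ S : Finset V, s ∈ S → t ∉ S → 1 ≤ cutFun x S) ∧
  (∀ S : Finset V, s ∉ S → t ∉ S → ∀ v ∈ S, 2 * y v ≤ cutFun x S) ∧
  y s = 1 / 2 ∧ y t = 1 / 2

/-! A cut `S` is crossed by stroll `i` when it separates `d i` from `d (i + 1)`. Going once
around the cyclic sequence of terminals `d`, a cut containing some but not all terminals is
crossed at least twice, once in each direction, and each crossing stroll contributes at least `1`.
A cut containing none (or, passing to the complement, all) of the terminals is crossed by no
stroll, but then every stroll contributes `2 y^i_v` for a vertex `v` on the terminal-free side,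
and these add up to `2`. -/

open Fin.NatCast in
theorem Fin.exists_and_not_add_one {k : ℕ} [NeZero k] {P : Fin k → Prop}
    (hP : ∃ j, P j) (hnP : ∃ m, ¬ P m) : ∃ i, P i ∧ ¬ P (i + 1) := by
  by_contra! hstep
  obtain ⟨j, hj⟩ := hP
  obtain ⟨m, hm⟩ := hnP
  have hreach : ∀ n : ℕ, P (j + (n : Fin k)) := by
    intro n
    induction n with
    | zero => simpa using hj
    | succ n ih => simpa [add_assoc] using hstep _ ih
  apply hm
  simpa using hreach (m - j).val

section Cut

variable {V : Type*} [Fintype V] [DecidableEq V]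

theorem cutFun_sum {ι : Type*} (s : Finset ι) (x : ι → V → V → ℝ) (S : Finset V) :
    cutFun (fun u w => ∑ i ∈ s, x i u w) S = ∑ i ∈ s, cutFun (x i) S := by
  unfold cutFun
  rw [Finset.sum_comm (s := s)]
  exact Finset.sum_congr rfl fun u _ => Finset.sum_comm

theorem cutFun_nonneg {x : V → V → ℝ} (hx : ∀ u v, 0 ≤ x u v) (S : Finset V) :
    0 ≤ cutFun x S :=
  Finset.sum_nonneg fun u _ => Finset.sum_nonneg fun v _ => hx u v

theorem cutFun_compl {x : V → V → ℝ} (hsymm : ∀ u v, x u v = x v u) (S : Finset V) :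
    cutFun x Sᶜ = cutFun x S := by
  unfold cutFun
  rw [compl_compl, Finset.sum_comm]
  exact Finset.sum_congr rfl fun u _ => Finset.sum_congr rfl fun v _ => hsymm v u

end Cut

namespace IsStroll

variable {V : Type*} [Fintype V] [DecidableEq V] {x : V → V → ℝ} {y : V → ℝ} {s t : V}

theorem cutFun_singleton (h : IsStroll x y s t) (v : V) : cutFun x {v} = 2 * y v :=
  h.2.2.2.2.1 v

theorem one_le_cutFun (h : IsStroll x y s t) {S : Finset V} (hst : s ∈ S ↔ t ∉ S) :
    1 ≤ cutFun x S := by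
  by_cases hs : s ∈ S
  · exact h.2.2.2.2.2.1 S hs (hst.mp hs)
  · rw [← cutFun_compl h.2.1]
    exact h.2.2.2.2.2.1 Sᶜ (Finset.mem_compl.mpr hs) (by simpa using not_not.mp (mt hst.mpr hs))

theorem two_mul_le_cutFun_of_notMem (h : IsStroll x y s t) {S : Finset V} (hs : s ∉ S)
    (ht : t ∉ S) {v : V} (hv : v ∈ S) : 2 * y v ≤ cutFun x S :=
  h.2.2.2.2.2.2.1 S hs ht v hv

theorem two_mul_le_cutFun_of_mem (h : IsStroll x y s t) {S : Finset V} (hs : s ∈ S)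
    (ht : t ∈ S) {v : V} (hv : v ∉ S) : 2 * y v ≤ cutFun x S := by
  rw [← cutFun_compl h.2.1]
  exact h.two_mul_le_cutFun_of_notMem (by simpa using hs) (by simpa using ht)
    (Finset.mem_compl.mpr hv)

end IsStroll

section StrollSum

variable {V : Type*} [Fintype V] [DecidableEq V] {k : ℕ} {d : Fin k → V}
  {x : Fin k → V → V → ℝ} {y : Fin k → V → ℝ}

theorem two_le_sum_cutFun_of_forall_two_mul_le {S : Finset V} {v : V}
    (hcov : ∑ i, y i v = 1) (hle : ∀ i, 2 * y i v ≤ cutFun (x i) S) :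
    2 ≤ ∑ i, cutFun (x i) S :=
  calc (2 : ℝ) = ∑ i, 2 * y i v := by rw [← Finset.mul_sum, hcov, mul_one]
    _ ≤ ∑ i, cutFun (x i) S := Finset.sum_le_sum fun i _ => hle i

theorem two_le_sum_cutFun_of_crossing [NeZero k] (hstroll : ∀ i, IsStroll (x i) (y i) (d i) (d (i + 1)))
    {S : Finset V} (hin : ∃ i, d i ∈ S) (hout : ∃ i, d i ∉ S) :
    2 ≤ ∑ i, cutFun (x i) S := by
  obtain ⟨i, hi, hi1⟩ := Fin.exists_and_not_add_one hin hout
  obtain ⟨j, hj, hj1⟩ := Fin.exists_and_not_add_one (P := fun i => d i ∉ S) hout (by simpa using hin)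
  have hij : i ≠ j := by rintro rfl; exact hj hi
  have hcross_i := (hstroll i).one_le_cutFun (S := S) (iff_of_true hi hi1)
  have hcross_j := (hstroll j).one_le_cutFun (S := S) (iff_of_false hj hj1)
  have hpair : cutFun (x i) S + cutFun (x j) S ≤ ∑ l, cutFun (x l) S :=
    calc _ = ∑ l ∈ {i, j}, cutFun (x l) S := (Finset.sum_pair hij).symm
      _ ≤ _ := Finset.sum_le_sum_of_subset_of_nonneg (Finset.subset_univ _)
        fun l _ _ => cutFun_nonneg (hstroll l).1 S
  linarith

end StrollSum

theorem sum_strolls_mem_heldKarp_general {V : Type*} [Fintype V] [DecidableEq V] {k : ℕ} [NeZero k]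
    (d : Fin k → V)
    (x : Fin k → V → V → ℝ) (y : Fin k → V → ℝ)
    (hstroll : ∀ i : Fin k, IsStroll (x i) (y i) (d i) (d (i + 1)))
    (hcov : ∀ v : V, ∑ i : Fin k, y i v = 1) :
    (∀ v : V, cutFun (fun u w => ∑ i : Fin k, x i u w) {v} = 2) ∧
    (∀ S : Finset V, S.Nonempty → S ≠ Finset.univ →
      2 ≤ cutFun (fun u w => ∑ i : Fin k, x i u w) S) := by
  refine ⟨fun v => ?_, fun S hSne hSuniv => ?_⟩
  · simp only [cutFun_sum, fun i => (hstroll i).cutFun_singleton v, ← Finset.mul_sum, hcov v,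
      mul_one]
  rw [cutFun_sum]
  by_cases hin : ∃ i, d i ∈ S
  · by_cases hout : ∃ i, d i ∉ S
    · exact two_le_sum_cutFun_of_crossing hstroll hin hout
    · push Not at hout
      obtain ⟨v, -, hv⟩ := Finset.exists_of_ssubset (Finset.ssubset_univ_iff.mpr hSuniv)
      exact two_le_sum_cutFun_of_forall_two_mul_le (hcov v) fun i =>
        (hstroll i).two_mul_le_cutFun_of_mem (hout i) (hout (i + 1)) hv
  · push Not at hin
    obtain ⟨v, hv⟩ := hSne
    exact two_le_sum_cutFun_of_forall_two_mul_le (hcov v) fun i =>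
      (hstroll i).two_mul_le_cutFun_of_notMem (hin i) (hin (i + 1)) hv

/-- If `(x^i, y^i)` is a fractional `d_i`-`d_{i+1}` stroll for each `i` and the strolls jointly
cover every vertex exactly once, then `x = Σ_i x^i` lies in the Held–Karp polytope. -/
theorem sum_strolls_mem_heldKarp {V : Type*} [Fintype V] [DecidableEq V] {k : ℕ} [NeZero k]
    (d : Fin k → V) (hd : Function.Injective d)
    (x : Fin k → V → V → ℝ) (y : Fin k → V → ℝ)
    (hstroll : ∀ i : Fin k, IsStroll (x i) (y i) (d i) (d (i + 1)))
    (hcov : ∀ v : V, ∑ i : Fin k, y i v = 1) :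
    (∀ v : V, cutFun (fun u w => ∑ i : Fin k, x i u w) {v} = 2) ∧
    (∀ S : Finset V, S.Nonempty → S ≠ Finset.univ →
      2 ≤ cutFun (fun u w => ∑ i : Fin k, x i u w) S) :=
  sum_strolls_mem_heldKarp_general d x y hstroll hcov
end

section
/- Let G = (V,E) be a complete graph with metric edge costs c (c symmetric, nonnegative, satisfying the triangle inequality), let d_1,...,d_k ∈ V be distinct, and let M = (V, E_M) be a connected Eulerian multigraph (all vertex degrees even) whose edges come from E (with multiplicities), together with a closed walk in M that visits d_1,...,d_k in this order. Then there exists a Hamiltonian cycle C of G that visits d_1,...,d_k in this order and has cost c(C) ≤ c(E_M). -/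
/-!
Concatenating the walks `W i` gives a closed walk through `d 0, …, d (k - 1)`, in this order,
that uses every edge of `M` at most as often as its multiplicity. As in Hierholzer's algorithm,
as long as some vertex of the current closed walk still has an unused edge, the unused edges
(whose degrees are all even) contain a closed walk through that vertex, which is spliced in.
When this stops, every vertex of the walk has used up all of its edges, so by connectivity of `M`
the walk visits every vertex. Keeping just one occurrence of every vertex, chosen so that the
`d i` stay in order, gives a Hamiltonian cycle; by the triangle inequality each shortcut is no
more expensive than the stretch of walk it replaces, and the walk costs at most `c(E_M)`.
-/

open Finset SimpleGraph
open scoped List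

section

variable {V : Type*}

theorem List.Sublist.exists_nodup_between [DecidableEq V] {D L : List V} (h : D <+ L)
    (hD : D.Nodup) : ∃ P, D <+ P ∧ P <+ L ∧ P.Nodup ∧ ∀ x ∈ L, x ∈ P := by
  induction h with
  | slnil => exact ⟨[], .slnil, .slnil, List.nodup_nil, by simp⟩
  | @cons L D x _ ih =>
    obtain ⟨P, hDP, hPL, hP, hcov⟩ := ih hD
    by_cases hx : x ∈ P
    · exact ⟨P, hDP, hPL.cons x, hP, List.forall_mem_cons.mpr ⟨hx, hcov⟩⟩
    · exact ⟨x :: P, hDP.cons x, hPL.cons_cons x, List.nodup_cons.mpr ⟨hx, hP⟩,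
        List.forall_mem_cons.mpr
          ⟨List.mem_cons_self, fun y hy => List.mem_cons_of_mem x (hcov y hy)⟩⟩
  | @cons_cons L D x _ ih =>
    obtain ⟨hxD, hD⟩ := List.nodup_cons.mp hD
    obtain ⟨P, hDP, hPL, hP, hcov⟩ := ih hD
    refine ⟨x :: P.erase x, ?_, (P.erase_sublist.trans hPL).cons_cons x,
      List.nodup_cons.mpr ⟨hP.not_mem_erase, hP.erase x⟩, ?_⟩
    · simpa [List.erase_of_not_mem hxD] using (hDP.erase x).cons_cons x
    · intro y hy
      by_cases hyx : y = x
      · simp [hyx]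
      · simp only [List.mem_cons, hyx, false_or] at hy ⊢
        exact (List.mem_erase_of_ne hyx).mpr (hcov y hy)

section PathCost

variable (c : Sym2 V → ℝ)

def pathCost : List V → ℝ
  | u :: v :: l => c s(u, v) + pathCost (v :: l)
  | _ => 0

@[simp]
lemma pathCost_cons_cons (u v : V) (l : List V) :
    pathCost c (u :: v :: l) = c s(u, v) + pathCost c (v :: l) := rfl

@[simp]
lemma pathCost_singleton (u : V) : pathCost c [u] = 0 := rfl

variable {c}

theorem pathCost_le_of_sublist (htri : ∀ u x w : V, c s(u, w) ≤ c s(u, x) + c s(x, w))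
    {l₁ l₂ : List V} (h : l₁ <+ l₂) (a b : V) :
    pathCost c (a :: (l₁ ++ [b])) ≤ pathCost c (a :: (l₂ ++ [b])) := by
  induction h generalizing a with
  | slnil => rfl
  | @cons l₁ l₂ x _ ih =>
    refine (ih a).trans ?_
    obtain ⟨y, t, ht⟩ := List.exists_cons_of_ne_nil (l := l₂ ++ [b]) (by simp)
    rw [List.cons_append, ht, pathCost_cons_cons, pathCost_cons_cons, pathCost_cons_cons]
    linarith [htri a x y]
  | @cons_cons l₁ l₂ x _ ih =>
    simpa using ih x

lemma pathCost_append_singleton (l : List V) (hl : l ≠ []) (b : V) :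
    pathCost c (l ++ [b]) = pathCost c l + c s(l.getLast hl, b) := by
  induction l with
  | nil => contradiction
  | cons u t ih =>
    cases t with
    | nil => simp
    | cons v t =>
      rw [List.cons_append, List.cons_append, pathCost_cons_cons, ← List.cons_append,
        ih (List.cons_ne_nil _ _)]
      simp [add_assoc]

lemma pathCost_eq_sum_range (l : List V) (b : V) :
    pathCost c l = ∑ i ∈ range (l.length - 1), c s(l.getD i b, l.getD (i + 1) b) := by
  induction l with
  | nil => simp [pathCost]
  | cons u t ih =>
    cases t with
    | nil => simp
    | cons v t => simp [ih, sum_range_succ', add_comm]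

theorem SimpleGraph.Walk.pathCost_support {G : SimpleGraph V} {u v : V} (p : G.Walk u v) :
    pathCost c p.support = (p.edges.map c).sum := by
  induction p with
  | nil => simp
  | cons h p ih =>
    rw [support_cons, ← p.cons_tail_support, pathCost_cons_cons, p.cons_tail_support, ih]
    simp

end PathCost

namespace SimpleGraph.Walk

variable [DecidableEq V] {G : SimpleGraph V}

/-! A multigraph on `V` is a multiplicity function `m : Sym2 V → ℕ`, and its walks are the walks
`p` in the complete graph with `p.edgeCount ≤ m`. -/

def edgeCount {u v : V} (p : G.Walk u v) (e : Sym2 V) : ℕ := p.edges.count e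

@[simp]
lemma edgeCount_nil {u : V} : (nil : G.Walk u u).edgeCount = 0 := rfl

lemma edgeCount_cons {u v w : V} (h : G.Adj u v) (p : G.Walk v w) :
    (cons h p).edgeCount = p.edgeCount + Pi.single s(u, v) 1 := by
  ext e
  simp only [edgeCount, edges_cons, List.count_cons, beq_iff_eq, Pi.add_apply, Pi.single_apply]
  grind

lemma edgeCount_append {u v w : V} (p : G.Walk u v) (q : G.Walk v w) :
    (p.append q).edgeCount = p.edgeCount + q.edgeCount := by
  ext e
  simp [edgeCount, List.count_append]

lemma edgeCount_concat {u v w : V} (p : G.Walk u v) (h : G.Adj v w) :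
    (p.concat h).edgeCount = p.edgeCount + Pi.single s(v, w) 1 := by
  rw [concat_eq_append, edgeCount_append, edgeCount_cons, edgeCount_nil, zero_add]

@[simp]
lemma edgeCount_copy {u v u' v' : V} (p : G.Walk u v) (hu : u = u') (hv : v = v') :
    (p.copy hu hv).edgeCount = p.edgeCount := by
  subst hu hv
  rfl

theorem mem_support_of_reachable {m : Sym2 V → ℕ} {a b : V} {q : G.Walk a b}
    (hsat : ∀ x ∈ q.support, ∀ y, m s(x, y) ≤ q.edgeCount s(x, y)) {u v : V}
    (h : (fromEdgeSet {e | m e ≠ 0}).Reachable u v) (hu : u ∈ q.support) : v ∈ q.support := by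
  obtain ⟨w⟩ := h
  induction w with
  | nil => exact hu
  | @cons u u' v h w ih =>
    refine ih (q.snd_mem_support_of_mem_edges (t := u) (List.count_pos_iff.mp ?_))
    simp only [fromEdgeSet_adj, Set.mem_ofPred_eq] at h
    exact (Nat.pos_of_ne_zero h.1).trans_le (hsat u hu u')

variable [Fintype V] {m : Sym2 V → ℕ}

lemma length_le_sum_of_edgeCount_le {u v : V} {p : G.Walk u v} (hp : p.edgeCount ≤ m) :
    p.length ≤ ∑ e, m e := by
  have hsum : ∑ e, p.edgeCount e = p.length := by
    simp [edgeCount, ← Multiset.coe_count, ← length_edges]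
  exact hsum ▸ sum_le_sum fun e _ => hp e

theorem sum_map_edges_le_of_edgeCount_le {c : Sym2 V → ℝ} (hc : ∀ e, 0 ≤ c e) {u v : V}
    {p : G.Walk u v} (hp : p.edgeCount ≤ m) :
    (p.edges.map c).sum ≤ ∑ e, (m e : ℝ) * c e := by
  rw [sum_list_map_count, sum_subset (subset_univ p.edges.toFinset) fun e _ he => by
    rw [List.count_eq_zero_of_not_mem (by simpa using he), zero_smul]]
  refine sum_le_sum fun e _ => ?_
  rw [nsmul_eq_mul]
  exact mul_le_mul_of_nonneg_right (by exact_mod_cast hp e) (hc e)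

end SimpleGraph.Walk

section MultiDegree

variable [Fintype V]

def multiDegree (m : Sym2 V → ℕ) (v : V) : ℕ := ∑ w, m s(v, w)

@[simp]
lemma multiDegree_zero (v : V) : multiDegree 0 v = 0 := sum_const_zero

lemma multiDegree_add (m m' : Sym2 V → ℕ) (v : V) :
    multiDegree (m + m') v = multiDegree m v + multiDegree m' v :=
  sum_add_distrib

lemma multiDegree_mono {m m' : Sym2 V → ℕ} (h : m' ≤ m) (v : V) :
    multiDegree m' v ≤ multiDegree m v :=
  sum_le_sum fun _ _ => h _

lemma multiDegree_sub {m m' : Sym2 V → ℕ} (h : m' ≤ m) (v : V) :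
    multiDegree (m - m') v = multiDegree m v - multiDegree m' v :=
  sum_tsub_distrib _ fun _ _ => h _

lemma multiDegree_single [DecidableEq V] {u w : V} (huw : u ≠ w) (v : V) :
    multiDegree (Pi.single s(u, w) 1) v =
      (if v = u then 1 else 0) + (if v = w then 1 else 0) := by
  unfold multiDegree
  split_ifs <;> subst_vars <;> simp_all [Pi.single_apply]

end MultiDegree

namespace SimpleGraph.Walk

variable [Fintype V] [DecidableEq V]

lemma even_multiDegree_edgeCount_iff {G : SimpleGraph V} {a b : V} (p : G.Walk a b) (v : V) :
    Even (multiDegree p.edgeCount v) ↔ (v = a ↔ v = b) := by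
  induction p with
  | nil => simp
  | @cons u w b h p ih =>
    rw [edgeCount_cons, multiDegree_add, multiDegree_single h.ne, Nat.even_add, ih]
    by_cases hvu : v = u <;> by_cases hvw : v = w <;> simp_all [parity_simps]

lemma even_multiDegree_edgeCount {G : SimpleGraph V} {a : V} (p : G.Walk a a) (v : V) :
    Even (multiDegree p.edgeCount v) := by
  simp [even_multiDegree_edgeCount_iff]

variable {m : Sym2 V → ℕ}

/-- A walk ending at `u ≠ x` has odd degree at `u`, while `m` has even degree there, so the walk
can be continued along an unused edge; this can only stop back at `x`. -/
theorem exists_closed_walk_length_ge (hloop : ∀ v, m s(v, v) = 0)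
    (heven : ∀ v, Even (multiDegree m v)) {x u : V} (q : (⊤ : SimpleGraph V).Walk x u)
    (hq : q.edgeCount ≤ m) :
    ∃ C : (⊤ : SimpleGraph V).Walk x x, C.edgeCount ≤ m ∧ q.length ≤ C.length := by
  by_cases hux : u = x
  · subst hux
    exact ⟨q, hq, le_rfl⟩
  have hlt : multiDegree q.edgeCount u < multiDegree m u := by
    refine (multiDegree_mono hq u).lt_of_ne fun h => ?_
    simpa [← h, q.even_multiDegree_edgeCount_iff, hux] using heven u
  obtain ⟨w, -, hw⟩ := exists_lt_of_sum_lt hlt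
  have huw : u ≠ w := by
    rintro rfl
    simp [hloop] at hw
  set q' := q.concat ((top_adj u w).mpr huw)
  have hq' : q'.edgeCount ≤ m := by
    intro e
    rw [edgeCount_concat, Pi.add_apply, Pi.single_apply]
    split_ifs with he
    · subst he
      exact hw
    · simpa using hq e
  have hlen := length_le_sum_of_edgeCount_le hq'
  obtain ⟨C, hC, hCq'⟩ := exists_closed_walk_length_ge hloop heven q' hq'
  simp only [q', length_concat] at hCq'
  exact ⟨C, hC, by omega⟩
termination_by ∑ e, m e - q.length
decreasing_by simp only [q', length_concat] at hlen ⊢; omega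

theorem exists_longer_closed_walk (hloop : ∀ v, m s(v, v) = 0)
    (heven : ∀ v, Even (multiDegree m v)) {a : V} (p : (⊤ : SimpleGraph V).Walk a a)
    (hp : p.edgeCount ≤ m) {x y : V} (hx : x ∈ p.support)
    (hxy : p.edgeCount s(x, y) < m s(x, y)) :
    ∃ p' : (⊤ : SimpleGraph V).Walk a a,
      p'.edgeCount ≤ m ∧ p.support <+ p'.support ∧ p.length < p'.length := by
  have hne : x ≠ y := by
    rintro rfl
    simp [hloop] at hxy
  set R := m - p.edgeCount
  have hRloop : ∀ v, R s(v, v) = 0 := fun v => by simp [R, hloop]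
  have hReven : ∀ v, Even (multiDegree R v) := fun v => by
    rw [multiDegree_sub hp, Nat.even_sub (multiDegree_mono hp v)]
    simp [heven, p.even_multiDegree_edgeCount]
  set xy : (⊤ : SimpleGraph V).Walk x y := cons ((top_adj x y).mpr hne) nil
  have hxyR : xy.edgeCount ≤ R := by
    intro e
    simp only [xy, edgeCount_cons, edgeCount_nil, zero_add, Pi.single_apply]
    split_ifs with he
    · subst he
      simp only [R, Pi.sub_apply]
      omega
    · exact Nat.zero_le _
  obtain ⟨C, hCR, hClen⟩ := exists_closed_walk_length_ge hRloop hReven xy hxyR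
  obtain ⟨p₁, p₂, hp₁₂⟩ := mem_support_iff_exists_append.mp hx
  refine ⟨p₁.append (C.append p₂), fun e => ?_, ?_, ?_⟩
  · have hCe := hCR e
    have hpe := hp e
    simp only [R, hp₁₂, edgeCount_append, Pi.add_apply, Pi.sub_apply] at hCe hpe ⊢
    omega
  · rw [hp₁₂, support_append, support_append, tail_support_append]
    exact (List.sublist_append_right _ _).append_left _
  · simp only [xy, hp₁₂, length_append, length_cons, length_nil] at hClen ⊢
    omega

theorem exists_saturating_closed_walk (hloop : ∀ v, m s(v, v) = 0)
    (heven : ∀ v, Even (multiDegree m v)) {a : V} (p : (⊤ : SimpleGraph V).Walk a a)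
    (hp : p.edgeCount ≤ m) :
    ∃ q : (⊤ : SimpleGraph V).Walk a a, q.edgeCount ≤ m ∧ p.support <+ q.support ∧
      ∀ x ∈ q.support, ∀ y, m s(x, y) ≤ q.edgeCount s(x, y) := by
  by_cases hsat : ∀ x ∈ p.support, ∀ y, m s(x, y) ≤ p.edgeCount s(x, y)
  · exact ⟨p, hp, .refl _, hsat⟩
  simp only [not_forall, not_le] at hsat
  obtain ⟨x, hx, y, hxy⟩ := hsat
  obtain ⟨p', hp', hsub, hlt⟩ := exists_longer_closed_walk hloop heven p hp hx hxy
  have hlen := length_le_sum_of_edgeCount_le hp'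
  obtain ⟨q, hq, hsub', hsat⟩ := exists_saturating_closed_walk hloop heven p' hp'
  exact ⟨q, hq, hsub.trans hsub', hsat⟩
termination_by ∑ e, m e - p.length
decreasing_by omega

end SimpleGraph.Walk

theorem SimpleGraph.Walk.exists_walk_through_seq [DecidableEq V] {G : SimpleGraph V} {x : ℕ → V}
    (w : ∀ i, G.Walk (x i) (x (i + 1))) :
    ∀ n, (∀ i < n, x i ≠ x (i + 1)) → ∃ p : G.Walk (x 0) (x n),
      p.edgeCount = ∑ i ∈ range n, (w i).edgeCount ∧ (List.range (n + 1)).map x <+ p.support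
  | 0, _ => ⟨nil, by simp, by simp⟩
  | n + 1, hne => by
    obtain ⟨p, hpc, hps⟩ := exists_walk_through_seq w n fun i hi => hne i (by omega)
    refine ⟨p.append (w n), by rw [edgeCount_append, hpc, sum_range_succ], ?_⟩
    rw [List.range_succ, List.map_append, support_append]
    exact hps.append <| List.singleton_sublist.mpr <|
      end_mem_tail_support_of_ne (hne n n.lt_succ_self) _

open Fin.NatCast in
theorem SimpleGraph.Walk.exists_closed_walk_through [DecidableEq V] {G : SimpleGraph V} {k : ℕ}
    {d : Fin (k + 1) → V} (hd : Function.Injective d) (W : ∀ i, G.Walk (d i) (d (i + 1))) :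
    ∃ p : G.Walk (d 0) (d 0),
      p.edgeCount = ∑ i, (W i).edgeCount ∧ List.ofFn d <+ p.support := by
  set x : ℕ → V := fun i => d i
  let w : ∀ i, G.Walk (x i) (x (i + 1)) := fun i =>
    (W i).copy rfl (congrArg d (Nat.cast_succ i).symm)
  have hne : ∀ i < k, x i ≠ x (i + 1) := fun i hi h => by
    have := congrArg Fin.val (hd h)
    rw [Fin.val_natCast, Fin.val_natCast, Nat.mod_eq_of_lt (by omega),
      Nat.mod_eq_of_lt (by omega)] at this
    omega
  obtain ⟨p, hpc, hps⟩ := exists_walk_through_seq w k hne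
  -- `W (Fin.last k)` is `nil` when `k = 0`, so it is appended after the distinctness argument.
  refine ⟨(p.append (w k)).copy (by simp [x]) (by simp [x]), ?_, ?_⟩
  · rw [edgeCount_copy, edgeCount_append, hpc, ← sum_range_succ, ← Fin.sum_univ_eq_sum_range]
    exact sum_congr rfl fun i _ => by rw [edgeCount_copy, Fin.cast_val_eq_self]
  · have hx : List.ofFn d = (List.range (k + 1)).map x := by
      refine List.ext_getElem (by simp) fun i hi _ => ?_
      simp only [List.getElem_ofFn, List.getElem_map, List.getElem_range, x]
      exact congrArg d (Fin.ext (Nat.mod_eq_of_lt (by simpa using hi)).symm)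
    rw [support_copy, support_append, hx]
    exact hps.trans (List.sublist_append_left _ _)

theorem SimpleGraph.Walk.exists_shortcut [DecidableEq V] {G : SimpleGraph V} {c : Sym2 V → ℝ}
    (hcdiag : ∀ v, c s(v, v) = 0) (htri : ∀ u x w : V, c s(u, w) ≤ c s(u, x) + c s(x, w))
    {a : V} (q : G.Walk a a) {D : List V} (hD : a :: D <+ q.support) (hDnd : (a :: D).Nodup) :
    ∃ P, (a :: P).Nodup ∧ (∀ v ∈ q.support, v ∈ a :: P) ∧ a :: D <+ a :: P ∧
      pathCost c (a :: P ++ [a]) ≤ pathCost c q.support := by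
  rw [← q.cons_tail_support] at hD ⊢
  obtain ⟨haD, hDnd⟩ := List.nodup_cons.mp hDnd
  have hDT : D <+ q.support.tail.filter (· ≠ a) := by
    have := (List.cons_sublist_cons.mp hD).filter (· ≠ a)
    rwa [List.filter_eq_self.mpr fun x hx =>
      decide_eq_true (ne_of_mem_of_not_mem hx haD)] at this
  obtain ⟨P, hDP, hPT, hP, hcov⟩ := hDT.exists_nodup_between hDnd
  have haP : a ∉ P := fun h => by simpa using hPT.subset h
  refine ⟨P, List.nodup_cons.mpr ⟨haP, hP⟩, ?_, hDP.cons_cons a, ?_⟩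
  · intro v hv
    by_cases hva : v = a
    · simp [hva]
    · simp only [List.mem_cons, hva, false_or] at hv ⊢
      exact hcov v (by simpa [hva] using hv)
  · calc pathCost c (a :: P ++ [a])
        ≤ pathCost c (a :: q.support.tail ++ [a]) :=
          pathCost_le_of_sublist htri (hPT.trans List.filter_sublist) a a
      _ = pathCost c (a :: q.support.tail) := by
          rw [q.cons_tail_support, pathCost_append_singleton _ q.support_ne_nil,
            q.getLast_support, hcdiag, add_zero]

theorem exists_periodic_tour [Fintype V] [DecidableEq V] {c : Sym2 V → ℝ} {k : ℕ}
    (d : Fin k → V) {a : V} {P : List V} (hnd : (a :: P).Nodup) (hcov : ∀ v, v ∈ a :: P)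
    (hd : List.ofFn d <+ a :: P) :
    ∃ f : ℕ → V, (∀ i, f (i + Fintype.card V) = f i) ∧
      Function.Bijective (fun i : Fin (Fintype.card V) => f i) ∧
      (∃ g : Fin k → ℕ, StrictMono g ∧ (∀ i, g i < Fintype.card V) ∧
        ∀ i, f (g i) = d i) ∧
      ∑ i ∈ range (Fintype.card V), c s(f i, f (i + 1)) = pathCost c (a :: P ++ [a]) := by
  set T := a :: P
  set n := Fintype.card V
  set e := hnd.getEquivOfForallMemList T hcov
  have hlen : T.length = n := by simpa using Fintype.card_congr e
  set f : ℕ → V := fun i => T.getD (i % n) a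
  have hfT : ∀ i < n, f i = T.getD i a := fun i hi => by simp only [f, Nat.mod_eq_of_lt hi]
  have hfT' : ∀ j ≤ n, f j = (T ++ [a]).getD j a := by
    intro j hj
    rcases hj.lt_or_eq with hj | rfl
    · rw [hfT j hj, List.getD_append _ _ _ _ (hlen ▸ hj)]
    · simp [f, T, ← hlen]
  refine ⟨f, fun i => by simp [f], ?_, ?_, ?_⟩
  · have : (fun i : Fin n => f i) = e ∘ Fin.cast hlen.symm := funext fun i => by
      simp [hfT i i.2, e, List.getD_eq_getElem?_getD,
        List.getElem?_eq_getElem (by omega : (i : ℕ) < T.length)]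
    rw [this]
    exact e.bijective.comp (finCongr hlen.symm).bijective
  · obtain ⟨emb, hemb⟩ := List.sublist_iff_exists_orderEmbedding_getElem?_eq.mp hd
    have hget : ∀ i : Fin k, T[emb i]? = some (d i) := fun i => by simp [← hemb]
    have hlt : ∀ i : Fin k, emb i < n := fun i =>
      hlen ▸ (List.getElem?_eq_some_iff.mp (hget i)).1
    refine ⟨fun i => emb i, emb.strictMono.comp Fin.val_strictMono, hlt, fun i => ?_⟩
    rw [hfT _ (hlt i), List.getD_eq_getElem?_getD, hget, Option.getD_some]
  · rw [pathCost_eq_sum_range _ a]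
    simp only [List.length_append, List.length_singleton, hlen, Nat.add_sub_cancel]
    exact sum_congr rfl fun i hi => by
      rw [hfT' i (mem_range.mp hi).le, hfT' (i + 1) (mem_range.mp hi)]

end

theorem shortcut_eulerian_to_ordered_hamiltonian_cycle_general
    {V : Type*} [Fintype V] [DecidableEq V]
    (c : Sym2 V → ℝ)
    (hc0 : ∀ e, 0 ≤ c e) (hcdiag : ∀ v : V, c s(v, v) = 0)
    (htri : ∀ u x w : V, c s(u, w) ≤ c s(u, x) + c s(x, w))
    {k : ℕ} [NeZero k] (d : Fin k → V) (hd : Function.Injective d)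
    (m : Sym2 V → ℕ) (hdiag : ∀ v : V, m s(v, v) = 0)
    (heven : ∀ v : V, Even (∑ w : V, m s(v, w)))
    (hconn : (SimpleGraph.fromEdgeSet {e : Sym2 V | m e ≠ 0}).Connected)
    (W : ∀ i : Fin k, (SimpleGraph.fromEdgeSet {e : Sym2 V | m e ≠ 0}).Walk (d i) (d (i + 1)))
    (hW : ∀ e : Sym2 V, (∑ i : Fin k, ((W i).edges.count e)) ≤ m e) :
    ∃ f : ℕ → V,
      (∀ i : ℕ, f (i + Fintype.card V) = f i) ∧
      Function.Bijective (fun i : Fin (Fintype.card V) => f i) ∧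
      (∃ g : Fin k → ℕ, StrictMono g ∧ (∀ i, g i < Fintype.card V) ∧ ∀ i, f (g i) = d i) ∧
      ∑ i ∈ Finset.range (Fintype.card V), c s(f i, f (i + 1)) ≤
        ∑ e : Sym2 V, (m e : ℝ) * c e := by
  obtain ⟨k, rfl⟩ := Nat.exists_eq_add_one.mpr (Nat.pos_of_neZero k)
  obtain ⟨p, hpW, hdp⟩ := Walk.exists_closed_walk_through hd fun i => (W i).mapLe le_top
  have hpm : p.edgeCount ≤ m := fun e => by
    rw [hpW, Finset.sum_apply]
    simpa [Walk.edgeCount, Walk.edges_mapLe_eq_edges] using hW e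
  obtain ⟨q, hqm, hpq, hsat⟩ := Walk.exists_saturating_closed_walk hdiag heven p hpm
  have hcover : ∀ v, v ∈ q.support := fun v =>
    q.mem_support_of_reachable hsat (hconn.preconnected (d 0) v) q.start_mem_support
  rw [List.ofFn_succ] at hdp
  obtain ⟨P, hnd, hcov, hdP, hcost⟩ :=
    q.exists_shortcut hcdiag htri (hdp.trans hpq) (List.ofFn_succ ▸ List.nodup_ofFn.mpr hd)
  obtain ⟨f, hper, hbij, hg, hsum⟩ :=
    exists_periodic_tour d hnd (fun v => hcov v (hcover v)) (List.ofFn_succ ▸ hdP)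
  refine ⟨f, hper, hbij, hg, ?_⟩
  calc _ = pathCost c (d 0 :: P ++ [d 0]) := hsum
    _ ≤ pathCost c q.support := hcost
    _ = (q.edges.map c).sum := q.pathCost_support
    _ ≤ _ := q.sum_map_edges_le_of_edgeCount_le hc0 hqm

/-- Shortcutting an Eulerian multigraph that contains a suitably ordered closed walk:
Let `G` be the complete graph on `V` with metric cost `c`, let `M` be a connected Eulerian
multigraph on `V` given by edge multiplicities `m`, and suppose `M` contains a closed walk
visiting the distinct vertices `d 1, …, d k` in this cyclic order (given as walks `W i` from
`d i` to `d (i+1)` jointly using each edge copy at most once). Then there is a Hamiltonian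
cycle of `G` visiting `d 1, …, d k` in this order of cost at most `c(E_M)`. -/
theorem shortcut_eulerian_to_ordered_hamiltonian_cycle
    {V : Type*} [Fintype V] [DecidableEq V] [Nonempty V]
    (c : Sym2 V → ℝ)
    (hc0 : ∀ e, 0 ≤ c e) (hcdiag : ∀ v : V, c s(v, v) = 0)
    (htri : ∀ u x w : V, c s(u, w) ≤ c s(u, x) + c s(x, w))
    {k : ℕ} [NeZero k] (d : Fin k → V) (hd : Function.Injective d)
    (m : Sym2 V → ℕ) (hdiag : ∀ v : V, m s(v, v) = 0)
    (heven : ∀ v : V, Even (∑ w : V, m s(v, w)))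
    (hconn : (SimpleGraph.fromEdgeSet {e : Sym2 V | m e ≠ 0}).Connected)
    (W : ∀ i : Fin k, (SimpleGraph.fromEdgeSet {e : Sym2 V | m e ≠ 0}).Walk (d i) (d (i + 1)))
    (hW : ∀ e : Sym2 V, (∑ i : Fin k, ((W i).edges.count e)) ≤ m e) :
    ∃ f : ℕ → V,
      (∀ i : ℕ, f (i + Fintype.card V) = f i) ∧
      Function.Bijective (fun i : Fin (Fintype.card V) => f i) ∧
      (∃ g : Fin k → ℕ, StrictMono g ∧ (∀ i, g i < Fintype.card V) ∧ ∀ i, f (g i) = d i) ∧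
      ∑ i ∈ Finset.range (Fintype.card V), c s(f i, f (i + 1)) ≤
        ∑ e : Sym2 V, (m e : ℝ) * c e :=
  shortcut_eulerian_to_ordered_hamiltonian_cycle_general c hc0 hcdiag htri d hd m hdiag heven hconn
    W hW
end
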